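/- A series morphism l : Γ → K^{≻1} induced from l : Φ → K^{≻1}\{0} satisfies the Growth Axiom (GA) (for all α ∈ Γ with α ≻ 1, l(α) ≺ α) if and only if LF(l(φ)) ≺ φ for every φ ∈ Φ. -/

import Mathlib

noncomputable section
open Classical

/-! Core: generalized series fields ℝ((Γ)) realized as Hahn series over Γᵒᵈ,
so supports are anti-well-ordered in Γ and the leading monomial is the max of the support. -/

/-- The generalized series field `ℝ((Γ))`. -/
abbrev GSF (Γ : Type*) [AddCommGroup Γ] [LinearOrder Γ] [IsOrderedAddMonoid Γ] : Type _ := HahnSeries Γᵒᵈ ℝ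

variable {Γ : Type*} [AddCommGroup Γ] [LinearOrder Γ] [IsOrderedAddMonoid Γ]

/-- The leading monomial of a series (max of the support; junk value `0` at `0`). -/
def LM (a : GSF Γ) : Γ := OrderDual.ofDual a.order

/-- The leading coefficient. -/
def LC (a : GSF Γ) : ℝ := a.leadingCoeff

/-- The monomial with exponent `γ` (written multiplicatively in the paper). -/
def mon (γ : Γ) : GSF Γ := HahnSeries.single (OrderDual.toDual γ) 1

/-- The leading term `LT(a)`. -/
def LTm (a : GSF Γ) : GSF Γ := LC a • mon (LM a)

/-- The leading monomial, with value `⊥` at `0`. -/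
def LMb (a : GSF Γ) : WithBot Γ := if a = 0 then ⊥ else ↑(LM a)

/-- Positivity in the anti-lexicographic ordering: positive leading coefficient. -/
def Kpos (a : GSF Γ) : Prop := 0 < LC a

/-- The anti-lexicographic (strict) ordering on `ℝ((Γ))`. -/
def Klt (a b : GSF Γ) : Prop := Kpos (b - a)

/-- Dominance relation `a ≼ b`. -/
def Kdom (a b : GSF Γ) : Prop := LMb a ≤ LMb b

/-- Strict dominance `a ≺ b`. -/
def KdomLt (a b : GSF Γ) : Prop := LMb a < LMb b

/-- Asymptotic equivalence `a ≍ b` (equal leading monomials). -/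
def Kasymp (a b : GSF Γ) : Prop := LMb a = LMb b

/-- `a ∼ b` : equal leading terms. -/
def Ksim (a b : GSF Γ) : Prop := a ≠ 0 ∧ b ≠ 0 ∧ LTm a = LTm b

/-- The maximal ideal `K^{≺1}` of the valuation ring: all monomials `≺ 1`. -/
def Kprec1 : Set (GSF Γ) := {x | ∀ τ ∈ x.support, OrderDual.ofDual τ < (0 : Γ)}

/-- The subring `K^{≻1}` of purely infinite series. -/
def Ksucc1 : Set (GSF Γ) := {x | ∀ τ ∈ x.support, (0 : Γ) < OrderDual.ofDual τ}

/-- The logarithm of `1`-units: `l₁(1+ε) = Σ_{n≥1} (-1)^{n-1} εⁿ/n` (junk `0` off `1 + K^{≺1}`). -/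
def l1 (x : GSF Γ) : GSF Γ :=
  if h : 0 < (x - 1).orderTop then
    (HahnSeries.SummableFamily.mk
      (fun n : ℕ => ((-1 : ℝ) ^ n / (n + 1)) • (x - 1) ^ (n + 1))
      (by
        refine Set.IsPWO.mono (HahnSeries.SummableFamily.isPWO_iUnion_support_powers
          (HahnSeries.zero_le_orderTop_iff.mp (le_of_lt h))) ?_
        intro g hg
        simp only [Set.mem_iUnion] at hg ⊢
        obtain ⟨n, hn⟩ := hg
        exact ⟨n + 1, Function.support_const_smul_subset _ _ hn⟩)
      (by
        intro g
        refine ((HahnSeries.SummableFamily.pow_finite_co_support h g).preimage_embedding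
          ⟨Nat.succ, Nat.succ_injective⟩).subset fun n hn => ?_
        simp only [Set.mem_preimage, Function.mem_support, Function.Embedding.coeFn_mk,
          HahnSeries.SummableFamily.powers_toFun] at hn ⊢
        exact fun hc => hn (by rw [HahnSeries.coeff_smul, hc, smul_zero]))).hsum
  else 0

/-! Second core layer: Γ as a subgroup of the Hahn group H(Φ), series derivations,
Hardy type derivations, series morphisms and pre-logarithms. -/

/-- A realization of the ordered abelian group `Γ` as a subgroup of the Hahn group
`H(Φ)` over the chain `Φ` of fundamental monomials (written additively): each `γ ∈ Γ`
is a formal product `∏ φ^{γ_φ}` with real exponents `expo γ φ` and anti-well-ordered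
support; `fm φ` is the fundamental monomial `φ` itself viewed in `Γ`; `LF` is the
leading fundamental monomial (max of the support, junk at `0`); the ordering of `Γ`
is the anti-lexicographic one. -/
structure HahnEmb (Φ Γ : Type*) [LinearOrder Φ] [AddCommGroup Γ] [LinearOrder Γ] [IsOrderedAddMonoid Γ] where
  expo : Γ → Φ → ℝ
  expo_add : ∀ α β φ, expo (α + β) φ = expo α φ + expo β φ
  expo_inj : ∀ α β, (∀ φ, expo α φ = expo β φ) → α = β
  supp_awo : ∀ α : Γ, (Function.support (expo α)).WellFoundedOn ((· > ·) : Φ → Φ → Prop)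
  fm : Φ → Γ
  expo_fm : ∀ φ ψ, expo (fm φ) ψ = if ψ = φ then 1 else 0
  LF : Γ → Φ
  LF_mem : ∀ α, α ≠ 0 → expo α (LF α) ≠ 0
  LF_max : ∀ α φ, expo α φ ≠ 0 → φ ≤ LF α
  pos_iff : ∀ α : Γ, 0 < α ↔ (α ≠ 0 ∧ 0 < expo α (LF α))

variable {Φ : Type*} [LinearOrder Φ]

/-- The support `supp γ ⊆ Φ` of a generalized monomial. -/
def HahnEmb.supp (E : HahnEmb Φ Γ) (γ : Γ) : Set Φ := Function.support (E.expo γ)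

/-- The leading exponent `LE(γ)`. -/
def HahnEmb.LE (E : HahnEmb Φ Γ) (γ : Γ) : ℝ := E.expo γ (E.LF γ)

/-- The logarithmic derivative `φ'/φ` of a fundamental monomial. -/
def logD (E : HahnEmb Φ Γ) (d : GSF Γ → GSF Γ) (φ : Φ) : GSF Γ :=
  d (mon (E.fm φ)) / mon (E.fm φ)

/-- `θ^{(φ)} = LM(φ'/φ)`. -/
def theta (E : HahnEmb Φ Γ) (d : GSF Γ → GSF Γ) (φ : Φ) : Γ := LM (logD E d φ)

/-- A series derivation: `1' = 0`, the strong Leibniz rule (D1) and strong linearity (D2),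
expressed coefficientwise (finitely many contributions to each coefficient, whose sum is
the coefficient of the derivative). -/
structure IsSeriesDerivation (E : HahnEmb Φ Γ) (d : GSF Γ → GSF Γ) : Prop where
  deriv_one : d 1 = 0
  leibniz_fin : ∀ (γ : Γ) (τ : Γᵒᵈ),
      {φ : Φ | E.expo γ φ * (logD E d φ).coeff τ ≠ 0}.Finite
  leibniz : ∀ (γ : Γ) (τ : Γᵒᵈ),
      (d (mon γ)).coeff (OrderDual.toDual (γ + OrderDual.ofDual τ))
        = ∑ᶠ φ : Φ, E.expo γ φ * (logD E d φ).coeff τ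
  linear_fin : ∀ (a : GSF Γ) (τ : Γᵒᵈ),
      {γ : Γᵒᵈ | a.coeff γ * (d (HahnSeries.single γ 1)).coeff τ ≠ 0}.Finite
  linear : ∀ (a : GSF Γ) (τ : Γᵒᵈ),
      (d a).coeff τ = ∑ᶠ γ : Γᵒᵈ, a.coeff γ * (d (HahnSeries.single γ 1)).coeff τ

/-- A Hardy type derivation: (HD1) the constants are `ℝ`, (HD2) l'Hospital's rule,
(HD3) compatibility of the logarithmic derivative with the dominance relation,
with `≍` exactly for comparable elements. -/
structure IsHardy (E : HahnEmb Φ Γ) (d : GSF Γ → GSF Γ) : Prop where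
  constants : ∀ a : GSF Γ, d a = 0 ↔ ∃ r : ℝ, a = (r : ℝ) • (1 : GSF Γ)
  hospital : ∀ a b : GSF Γ, a ≠ 0 → b ≠ 0 → ¬ Kasymp a 1 → ¬ Kasymp b 1 →
      (Kdom a b ↔ Kdom (d a) (d b))
  logcomp : ∀ a b : GSF Γ, a ≠ 0 → b ≠ 0 → |LM b| < |LM a| → 0 < |LM b| →
      Kdom (d b / b) (d a / a) ∧
      (Kasymp (d a / a) (d b / b) ↔ E.LF (LM a) = E.LF (LM b))

/-- A series morphism `l : Γ → K`, i.e. axiom (L): `l(∏ φ^{α_φ}) = Σ α_φ l(φ)`,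
expressed coefficientwise via the summability of the families involved. -/
structure IsSeriesMorphism (E : HahnEmb Φ Γ) (l : Γ → GSF Γ) : Prop where
  fin : ∀ (α : Γ) (τ : Γᵒᵈ), {φ : Φ | E.expo α φ * (l (E.fm φ)).coeff τ ≠ 0}.Finite
  eq : ∀ (α : Γ) (τ : Γᵒᵈ), (l α).coeff τ = ∑ᶠ φ : Φ, E.expo α φ * (l (E.fm φ)).coeff τ

/-- The pre-logarithm on `K_{>0}` induced by a pre-logarithmic section `l` on `Γ`:
`l(a) = log(LC a) + l(LM a) + l₁(1 + ε_a)` where `a = LT(a)(1+ε_a)`. -/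
def prelogOf (l : Γ → GSF Γ) (a : GSF Γ) : GSF Γ :=
  Real.log (LC a) • (1 : GSF Γ) + l (LM a) + l1 (a / LTm a)

/-- `l` is a pre-logarithmic section: a series morphism into `K^{≻1}` which is an
embedding of ordered groups. -/
structure IsPrelogSection (E : HahnEmb Φ Γ) (l : Γ → GSF Γ) : Prop where
  morphism : IsSeriesMorphism E l
  purely_infinite : ∀ α : Γ, l α ∈ Ksucc1
  order_preserving : ∀ α β : Γ, α < β → Klt (l α) (l β)

/-- Compatibility of the induced pre-logarithm with the derivation:
`l(a)' = a'/a` for all `a > 0`. -/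
def LogCompatible (d : GSF Γ → GSF Γ) (l : Γ → GSF Γ) : Prop :=
  ∀ a : GSF Γ, Kpos a → d (prelogOf l a) = d a / a

/-- The Growth Axiom (GA): `l(α) ≺ α` for all monomials `α ≻ 1`. -/
def GrowthAxiom (l : Γ → GSF Γ) : Prop :=
  ∀ α : Γ, 0 < α → KdomLt (l α) (mon α)

/-! By the series-morphism property every monomial of `l(α)` is a monomial of some `l(ψ)` with
`ψ ∈ supp α`, and a monomial whose leading fundamental monomial lies below `LF α` is below `α`
when `α ≻ 1`; this gives (HL3) ⇒ (GA).

Conversely, assume (GA) and let `β ≻ 1`. In the coefficient of `β` in `l(β) = Σ β_ψ l(ψ)`, the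
terms with `ψ < LF β` vanish because `l(ψ) ≺ ψ ≺ β`, so it equals `LE(β)` times the coefficient
of `β` in `l(LF β)`; by (GA) it is `0`. Hence `β = LM l(φ)` forces `LF β ≠ φ`, while
`LF β > φ` would give `LM l(φ) ≻ φ`, against (GA). -/

lemma le_LM_of_coeff_ne_zero {a : GSF Γ} {γ : Γ} (h : a.coeff (OrderDual.toDual γ) ≠ 0) :
    γ ≤ LM a :=
  HahnSeries.order_le_of_coeff_ne_zero h

lemma coeff_LM_ne_zero {a : GSF Γ} (ha : a ≠ 0) : a.coeff (OrderDual.toDual (LM a)) ≠ 0 :=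
  HahnSeries.leadingCoeff_eq (x := a) ▸ HahnSeries.leadingCoeff_ne_zero.mpr ha

lemma LM_pos_of_mem_Ksucc1 {a : GSF Γ} (ha : a ∈ Ksucc1) (h0 : a ≠ 0) : 0 < LM a :=
  ha a.order (HahnSeries.mem_support _ _ |>.mpr (coeff_LM_ne_zero h0))

lemma LMb_mon (γ : Γ) : LMb (mon γ) = γ := by
  have hne : mon γ ≠ 0 := HahnSeries.single_ne_zero one_ne_zero
  rw [LMb, if_neg hne, LM, mon, HahnSeries.order_single one_ne_zero, OrderDual.ofDual_toDual]

lemma kdomLt_mon_iff {a : GSF Γ} {γ : Γ} : KdomLt a (mon γ) ↔ (a ≠ 0 → LM a < γ) := by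
  rw [KdomLt, LMb_mon, LMb]
  split_ifs with h <;> simp [h]

namespace HahnEmb

variable (E : HahnEmb Φ Γ)

def expoHom (φ : Φ) : Γ →+ ℝ := AddMonoidHom.mk' (E.expo · φ) fun α β => E.expo_add α β φ

lemma expo_zero (φ : Φ) : E.expo 0 φ = 0 :=
  map_zero (E.expoHom φ)

lemma expo_sub (α β : Γ) (φ : Φ) : E.expo (α - β) φ = E.expo α φ - E.expo β φ :=
  map_sub (E.expoHom φ) α β

variable {E}

lemma expo_eq_zero_of_LF_lt {γ : Γ} {φ : Φ} (h : E.LF γ < φ) : E.expo γ φ = 0 :=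
  not_imp_comm.mp (E.LF_max γ φ) (not_le.mpr h)

lemma LF_eq_of_expo_ne_zero {γ : Γ} {φ : Φ} (h0 : E.expo γ φ ≠ 0)
    (hup : ∀ χ, φ < χ → E.expo γ χ = 0) : E.LF γ = φ := by
  have hγ : γ ≠ 0 := by
    rintro rfl
    exact h0 (E.expo_zero φ)
  refine (E.LF_max γ φ h0).antisymm' (not_lt.mp fun hlt => E.LF_mem γ hγ ?_)
  exact hup _ hlt

lemma pos_of_expo_pos {γ : Γ} {φ : Φ} (h0 : 0 < E.expo γ φ)
    (hup : ∀ χ, φ < χ → E.expo γ χ = 0) : 0 < γ := by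
  have hLF := LF_eq_of_expo_ne_zero h0.ne' hup
  refine (E.pos_iff γ).mpr ⟨?_, hLF ▸ h0⟩
  rintro rfl
  exact h0.ne' (E.expo_zero φ)

variable (E) in
lemma LF_fm (φ : Φ) : E.LF (E.fm φ) = φ := by
  refine LF_eq_of_expo_ne_zero (by simp [E.expo_fm]) fun χ hχ => ?_
  rw [E.expo_fm, if_neg hχ.ne']

variable (E) in
lemma fm_pos (φ : Φ) : 0 < E.fm φ :=
  pos_of_expo_pos (E := E) (φ := φ) (by simp [E.expo_fm]) fun χ hχ => by
    rw [E.expo_fm, if_neg hχ.ne']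

lemma lt_of_LF_lt {α β : Γ} (hα : 0 < α) (h : E.LF β < E.LF α) : β < α := by
  have hαLE : 0 < E.expo α (E.LF α) := ((E.pos_iff α).mp hα).2
  refine sub_pos.mp (pos_of_expo_pos (E := E) (φ := E.LF α) ?_ fun χ hχ => ?_)
  · rwa [E.expo_sub, expo_eq_zero_of_LF_lt h, sub_zero]
  · rw [E.expo_sub, expo_eq_zero_of_LF_lt hχ, expo_eq_zero_of_LF_lt (h.trans hχ), sub_zero]

end HahnEmb

namespace IsSeriesMorphism

variable {E : HahnEmb Φ Γ} {l : Γ → GSF Γ}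

lemma map_zero (hl : IsSeriesMorphism E l) : l 0 = 0 := by
  ext τ
  rw [hl.eq 0 τ, HahnSeries.coeff_zero]
  exact finsum_eq_zero_of_forall_eq_zero fun ψ => by rw [E.expo_zero, zero_mul]

lemma exists_expo_ne_zero_of_coeff_ne_zero (hl : IsSeriesMorphism E l) {α : Γ} {τ : Γᵒᵈ}
    (h : (l α).coeff τ ≠ 0) : ∃ ψ, E.expo α ψ ≠ 0 ∧ (l (E.fm ψ)).coeff τ ≠ 0 := by
  by_contra! hall
  exact h ((hl.eq α τ).trans (finsum_eq_zero_of_forall_eq_zero fun ψ =>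
    mul_eq_zero.mpr ((Classical.em _).imp_right (hall ψ))))

end IsSeriesMorphism

lemma IsPrelogSection.map_ne_zero {E : HahnEmb Φ Γ} {l : Γ → GSF Γ}
    (hl : IsPrelogSection E l) {α : Γ} (hα : 0 < α) : l α ≠ 0 := by
  intro h
  have hlt := hl.order_preserving 0 α hα
  rw [Klt, Kpos, h, hl.morphism.map_zero, sub_zero, LC, HahnSeries.leadingCoeff_zero] at hlt
  exact hlt.false

lemma growthAxiom_iff {l : Γ → GSF Γ} :
    GrowthAxiom l ↔ ∀ α : Γ, 0 < α → l α ≠ 0 → LM (l α) < α := by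
  simp only [GrowthAxiom, kdomLt_mon_iff]

namespace GrowthAxiom

variable {l : Γ → GSF Γ}

lemma coeff_eq_zero_of_le (hGA : GrowthAxiom l) {α γ : Γ} (hα : 0 < α) (hγ : α ≤ γ) :
    (l α).coeff (OrderDual.toDual γ) = 0 := by
  by_contra h
  have hLM := growthAxiom_iff.mp hGA α hα fun h0 => h (by rw [h0, HahnSeries.coeff_zero])
  exact (hLM.trans_le hγ).not_ge (le_LM_of_coeff_ne_zero h)

lemma coeff_fm_LF_eq_zero {E : HahnEmb Φ Γ} (hGA : GrowthAxiom l) (hl : IsSeriesMorphism E l)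
    {β : Γ} (hβ : 0 < β) : (l (E.fm (E.LF β))).coeff (OrderDual.toDual β) = 0 := by
  have hsingle : (l β).coeff (OrderDual.toDual β)
      = E.expo β (E.LF β) * (l (E.fm (E.LF β))).coeff (OrderDual.toDual β) := by
    rw [hl.eq]
    refine finsum_eq_single _ _ fun ψ hψ => ?_
    rcases hψ.lt_or_gt with hlt | hgt
    · have hfm : E.fm ψ < β := HahnEmb.lt_of_LF_lt hβ (by rwa [E.LF_fm])
      rw [hGA.coeff_eq_zero_of_le (E.fm_pos ψ) hfm.le, mul_zero]
    · rw [HahnEmb.expo_eq_zero_of_LF_lt hgt, zero_mul]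
  rw [hGA.coeff_eq_zero_of_le hβ le_rfl, eq_comm] at hsingle
  exact (mul_eq_zero.mp hsingle).resolve_left (E.LF_mem β hβ.ne')

end GrowthAxiom

lemma growthAxiom_of_LF_LM_lt {E : HahnEmb Φ Γ} {l : Γ → GSF Γ} (hl : IsSeriesMorphism E l)
    (hHL : ∀ φ : Φ, E.LF (LM (l (E.fm φ))) < φ) : GrowthAxiom l := by
  refine growthAxiom_iff.mpr fun α hα hα0 => ?_
  obtain ⟨ψ, hψα, hψ⟩ := hl.exists_expo_ne_zero_of_coeff_ne_zero (coeff_LM_ne_zero hα0)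
  calc LM (l α) ≤ LM (l (E.fm ψ)) := le_LM_of_coeff_ne_zero hψ
    _ < α := HahnEmb.lt_of_LF_lt hα ((hHL ψ).trans_le (E.LF_max α ψ hψα))

lemma LF_LM_lt_of_growthAxiom {E : HahnEmb Φ Γ} {l : Γ → GSF Γ} (hl : IsPrelogSection E l)
    (hGA : GrowthAxiom l) (φ : Φ) : E.LF (LM (l (E.fm φ))) < φ := by
  have hlφ : l (E.fm φ) ≠ 0 := hl.map_ne_zero (E.fm_pos φ)
  set β := LM (l (E.fm φ))
  have hβ : 0 < β := LM_pos_of_mem_Ksucc1 (hl.purely_infinite _) hlφ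
  rcases lt_trichotomy (E.LF β) φ with hlt | heq | hgt
  · exact hlt
  · have hcoeff := hGA.coeff_fm_LF_eq_zero hl.morphism hβ
    rw [heq] at hcoeff
    exact absurd hcoeff (coeff_LM_ne_zero hlφ)
  · have hβlt : β < E.fm φ := growthAxiom_iff.mp hGA _ (E.fm_pos φ) hlφ
    exact absurd (HahnEmb.lt_of_LF_lt hβ (by rwa [E.LF_fm])) hβlt.not_gt

theorem statement5_general {Φ Γ : Type*} [LinearOrder Φ] [AddCommGroup Γ] [LinearOrder Γ] [IsOrderedAddMonoid Γ]
    (E : HahnEmb Φ Γ) (l : Γ → GSF Γ)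
    (hsec : IsPrelogSection E l) :
    GrowthAxiom l ↔ ∀ φ : Φ, E.LF (LM (l (E.fm φ))) < φ :=
  ⟨LF_LM_lt_of_growthAxiom hsec, growthAxiom_of_LF_LM_lt hsec.morphism⟩

/-- A pre-logarithmic section `l : Γ → K^{≻1}` which is a series morphism induced from a
map `Φ → K^{≻1}\{0}` satisfies the Growth Axiom (GA) (`l(α) ≺ α` for all `α ≻ 1`)
if and only if (HL3): `LF(l(φ)) ≺ φ` for every `φ ∈ Φ`. -/
theorem statement5 {Φ Γ : Type*} [LinearOrder Φ] [AddCommGroup Γ] [LinearOrder Γ] [IsOrderedAddMonoid Γ]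
    [Nontrivial Γ]
    (E : HahnEmb Φ Γ) (l : Γ → GSF Γ)
    (hsec : IsPrelogSection E l)
    (hne : ∀ φ : Φ, l (E.fm φ) ≠ 0) :
    GrowthAxiom l ↔ ∀ φ : Φ, E.LF (LM (l (E.fm φ))) < φ :=
  statement5_general E l hsec
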